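/- Let G be a countably infinite group with a Følner sequence (F_n). If A ⊆ G is (F_n)-normal and B ⊆ G is infinite, then the set BA = {b·a : b ∈ B, a ∈ A} has (F_n)-density 1, i.e., |BA ∩ F_n|/|F_n| → 1. -/

import Mathlib

open Filter

/- `(F n)` is a Følner sequence in the group `G`
(`h ∈ g • F n ↔ g⁻¹ * h ∈ F n`). -/
open scoped Classical in
def IsFolnerGroup {G : Type*} [Group G] (F : ℕ → Finset G) : Prop :=
  (∀ n, (F n).Nonempty) ∧
  ∀ g : G, Tendsto
    (fun n => (((F n).filter (fun h => g⁻¹ * h ∈ F n)).card : ℝ) / (F n).card)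
    atTop (nhds 1)

/- `A ⊆ G` is `(F n)`-normal. -/
open scoped Classical in
def IsNormalSet {G : Type*} [Mul G] (F : ℕ → Finset G) (A : Set G) : Prop :=
  ∀ K : Finset G, K.Nonempty → ∀ B : G → Bool,
    Tendsto
      (fun n =>
        (((F n).filter (fun g => ∀ h ∈ K, (h * g ∈ A ↔ B h = true))).card : ℝ) / (F n).card)
      atTop (nhds ((1 / 2 : ℝ) ^ K.card))

/-!
If `b ∈ B` and `g ∉ B A`, then `b⁻¹ g ∉ A`. So for a finite `S ⊆ B`, the complement of `B A`
lies in the set of `g` with `h g ∉ A` for all `h ∈ S⁻¹`, which by normality has density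
tending to `2^{-|S|}`. As `B` is infinite, `|S|` can be taken arbitrarily large.
-/

open scoped Pointwise
open Finset

namespace Finset

variable {α : Type*} {s : Finset α} {p q : α → Prop} [DecidablePred p] [DecidablePred q]

theorem card_filter_div_card_le_one : (#(s.filter p) : ℝ) / #s ≤ 1 :=
  div_le_one_of_le₀ (mod_cast card_filter_le s p) (Nat.cast_nonneg _)

theorem one_sub_card_filter_div_le [DecidableEq α] (hs : s.Nonempty)
    (hpq : ∀ x ∈ s, ¬p x → q x) :
    1 - (#(s.filter q) : ℝ) / #s ≤ #(s.filter p) / #s := by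
  have hcard : (0 : ℝ) < #s := mod_cast hs.card_pos
  have hcover : s ⊆ s.filter p ∪ s.filter q := fun x hx => by
    by_cases h : p x
    · exact mem_union_left _ (mem_filter.2 ⟨hx, h⟩)
    · exact mem_union_right _ (mem_filter.2 ⟨hx, hpq x hx h⟩)
  have hsum : (#s : ℝ) ≤ #(s.filter p) + #(s.filter q) :=
    mod_cast (card_le_card hcover).trans (card_union_le _ _)
  rw [sub_le_iff_le_add, ← add_div, le_div_iff₀ hcard, one_mul]
  exact hsum

end Finset

namespace IsNormalSet

open scoped Classical

variable {G : Type*} {F : ℕ → Finset G} {A : Set G}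

theorem eventually_nonempty [Mul G] [Nonempty G] (hA : IsNormalSet F A) :
    ∀ᶠ n in atTop, (F n).Nonempty := by
  obtain ⟨x⟩ := ‹Nonempty G›
  have hpos : ∀ᶠ n in atTop, 0 < (#((F n).filter
      fun g => ∀ h ∈ ({x} : Finset G), (h * g ∈ A ↔ true = true)) : ℝ) / #(F n) :=
    (hA {x} (singleton_nonempty x) fun _ => true).eventually
      (lt_mem_nhds (by positivity))
  filter_upwards [hpos] with n hn
  by_contra hempty
  simp [not_nonempty_iff_eq_empty.1 hempty] at hn

theorem eventually_card_filter_forall_notMem_div_lt [Mul G] (hA : IsNormalSet F A)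
    {K : Finset G} (hK : K.Nonempty) {ε : ℝ} (hε : (1 / 2 : ℝ) ^ #K < ε) :
    ∀ᶠ n in atTop, (#((F n).filter fun g => ∀ h ∈ K, h * g ∉ A) : ℝ) / #(F n) < ε := by
  simpa only [Bool.false_eq_true, iff_false] using
    (hA K hK fun _ => false).eventually (gt_mem_nhds hε)

theorem eventually_one_sub_lt_card_filter_mem_mul_div [Group G] (hA : IsNormalSet F A)
    {B : Set G} {S : Finset G} (hSB : ↑S ⊆ B) (hS : S.Nonempty) {ε : ℝ}
    (hε : (1 / 2 : ℝ) ^ #S < ε) :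
    ∀ᶠ n in atTop,
      1 - ε < (#((F n).filter fun g => ∃ b ∈ B, ∃ a ∈ A, g = b * a) : ℝ) / #(F n) := by
  rw [← card_inv] at hε
  filter_upwards [hA.eventually_nonempty,
    hA.eventually_card_filter_forall_notMem_div_lt hS.inv hε] with n hne hlt
  refine (sub_lt_sub_left hlt 1).trans_le (one_sub_card_filter_div_le hne ?_)
  intro g _ hg h hh ha
  rw [mem_inv'] at hh
  exact hg ⟨h⁻¹, hSB hh, h * g, ha, by group⟩

end IsNormalSet

open scoped Classical in
theorem BA_density_one_general
    {G : Type*} [Group G]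
    (F : ℕ → Finset G)
    (A B : Set G) (hA : IsNormalSet F A) (hB : B.Infinite) :
    Tendsto
      (fun n =>
        (((F n).filter (fun g => ∃ b ∈ B, ∃ a ∈ A, g = b * a)).card : ℝ) / (F n).card)
      atTop (nhds 1) := by
  refine tendsto_order.2 ⟨fun a ha => ?_, fun a ha => Eventually.of_forall fun n =>
    card_filter_div_card_le_one.trans_lt ha⟩
  have hpow : Tendsto (fun k : ℕ => (1 / 2 : ℝ) ^ (k + 1)) atTop (nhds 0) :=
    (tendsto_pow_atTop_nhds_zero_of_lt_one (by norm_num) (by norm_num)).comp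
      (tendsto_add_atTop_nat 1)
  obtain ⟨k, hk⟩ := (hpow.eventually (gt_mem_nhds (sub_pos.2 ha))).exists
  obtain ⟨S, hSB, hS⟩ := hB.exists_subset_card_eq (k + 1)
  have hSne : S.Nonempty := card_pos.1 (by omega)
  filter_upwards [hA.eventually_one_sub_lt_card_filter_mem_mul_div hSB hSne (hS ▸ hk)]
    with n hn
  linarith

open scoped Classical in
theorem BA_density_one
    {G : Type*} [Group G] [Countable G] [Infinite G]
    (F : ℕ → Finset G) (hF : IsFolnerGroup F)
    (A B : Set G) (hA : IsNormalSet F A) (hB : B.Infinite) :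
    Tendsto
      (fun n =>
        (((F n).filter (fun g => ∃ b ∈ B, ∃ a ∈ A, g = b * a)).card : ℝ) / (F n).card)
      atTop (nhds 1) :=
  BA_density_one_general F A B hA hB
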